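/- arXiv:cs/0504104 — 5 statements merged into one kernel-verified Lean document; each statement's English description precedes it below -/
import Mathlib

section
/- Let (X, c) be a metric space and let R, M ⊆ X be nonempty finite subsets. Let Q be a nonempty finite subset of R such that c(μ, Q) = c(μ, R) for every μ ∈ M (i.e., Q serves M as well as R does). Then for every point x ∈ X, c(x, Q) ≤ 2·c(x, M) + c(x, R). -/
/-- `kmDist x F` is the distance from a point `x` to a nonempty finite set `F`,
i.e. `min_{f ∈ F} dist x f` (junk value `0` if `F = ∅`). -/
noncomputable def kmDist {X : Type*} [MetricSpace X] (x : X) (F : Finset X) : ℝ :=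
  if h : F.Nonempty then F.inf' h (fun f => dist x f) else 0

lemma kmDist_le {X : Type*} [MetricSpace X] {x f : X} {F : Finset X} (hf : f ∈ F) :
    kmDist x F ≤ dist x f := by
  rw [kmDist, dif_pos ⟨f, hf⟩]
  exact Finset.inf'_le _ hf

lemma kmDist_exists {X : Type*} [MetricSpace X] (x : X) {F : Finset X} (h : F.Nonempty) :
    ∃ f ∈ F, kmDist x F = dist x f := by
  rw [kmDist, dif_pos h]
  obtain ⟨f, hf, he⟩ := Finset.exists_mem_eq_inf' h (fun f => dist x f)
  exact ⟨f, hf, he⟩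

lemma kmDist_triangle {X : Type*} [MetricSpace X] (x y : X) {F : Finset X} (h : F.Nonempty) :
    kmDist x F ≤ dist x y + kmDist y F := by
  obtain ⟨f, hf, he⟩ := kmDist_exists y h
  calc kmDist x F ≤ dist x f := kmDist_le hf
    _ ≤ dist x y + dist y f := dist_triangle _ _ _
    _ = dist x y + kmDist y F := by rw [he]

/-- If `Q ⊆ R` serves `M` as well as `R` does (i.e. `c(μ,Q) = c(μ,R)` for all `μ ∈ M`),
then for every point `x`, `c(x,Q) ≤ 2 c(x,M) + c(x,R)`. -/
theorem rgreedy_main_lemma {X : Type*} [MetricSpace X] (R M Q : Finset X)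
    (hR : R.Nonempty) (hM : M.Nonempty) (hQ : Q.Nonempty) (hQR : Q ⊆ R)
    (hserve : ∀ μ ∈ M, kmDist μ Q = kmDist μ R) :
    ∀ x : X, kmDist x Q ≤ 2 * kmDist x M + kmDist x R := by
  intro x
  obtain ⟨μ, hμM, hμ⟩ := kmDist_exists x hM
  obtain ⟨r, hrR, hr⟩ := kmDist_exists x hR
  calc kmDist x Q ≤ dist x μ + kmDist μ Q := kmDist_triangle x μ hQ
    _ = kmDist x M + kmDist μ R := by rw [hμ, hserve μ hμM]
    _ ≤ kmDist x M + dist μ r := by linarith [kmDist_le (x := μ) hrR]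
    _ ≤ kmDist x M + (dist μ x + dist x r) := by linarith [dist_triangle μ x r]
    _ = 2 * kmDist x M + kmDist x R := by rw [dist_comm μ x, hr, ← hμ]; ring
end

section
/- Let (X, c) be a finite metric space and let Q ⊊ R ⊆ X with Q nonempty. Then there exists r ∈ R \ Q such that cost(R \ {r}) − cost(R) ≤ (cost(Q) − cost(R)) / |R \ Q|. -/
/-- `kmCost F = ∑_{x ∈ X} c(x, F)`, the total service cost of the facility set `F`. -/
noncomputable def kmCost {X : Type*} [MetricSpace X] [Fintype X] (F : Finset X) : ℝ :=
  ∑ x : X, kmDist x F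

lemma kmDist_mono {X : Type*} [MetricSpace X] {x : X} {F G : Finset X}
    (hF : F.Nonempty) (h : F ⊆ G) : kmDist x G ≤ kmDist x F := by
  have hG : G.Nonempty := hF.mono h
  simp only [kmDist, dif_pos hF, dif_pos hG]
  apply Finset.le_inf'
  intro b hb
  exact Finset.inf'_le _ (h hb)

/-- If `Q ⊊ R` with `Q` nonempty, then some `r ∈ R \ Q` can be removed at incremental
cost at most `(cost(Q) − cost(R)) / |R \ Q|`. -/
theorem rgreedy_cheap_removal {X : Type*} [MetricSpace X] [Fintype X] [DecidableEq X]
    (Q R : Finset X) (hQ : Q.Nonempty) (hQR : Q ⊂ R) :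
    ∃ r ∈ R \ Q,
      kmCost (R.erase r) - kmCost R ≤ (kmCost Q - kmCost R) / ((R \ Q).card : ℝ) := by
  have hne : (R \ Q).Nonempty := by
    obtain ⟨r, hrR, hrQ⟩ := Finset.exists_of_ssubset hQR
    exact ⟨r, Finset.mem_sdiff.mpr ⟨hrR, hrQ⟩⟩
  have hcard : (0 : ℝ) < ((R \ Q).card : ℝ) := by
    exact_mod_cast Finset.card_pos.mpr hne
  have hRne : R.Nonempty := hQ.mono hQR.subset
  have hx : ∀ x : X, ∑ r ∈ R \ Q, (kmDist x (R.erase r) - kmDist x R)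
      ≤ kmDist x Q - kmDist x R := by
    intro x
    obtain ⟨f, hfR, hf⟩ := Finset.exists_mem_eq_inf' hRne (fun g => dist x g)
    have hdRf : kmDist x R = dist x f := by simp [kmDist, dif_pos hRne, hf]
    have hQle : kmDist x R ≤ kmDist x Q := kmDist_mono hQ hQR.subset
    have hzero : ∀ r ∈ R \ Q, r ≠ f → kmDist x (R.erase r) - kmDist x R ≤ 0 := by
      intro r _ hrf
      have hfe : f ∈ R.erase r := Finset.mem_erase.mpr ⟨fun h => hrf h.symm, hfR⟩
      have hne' : (R.erase r).Nonempty := ⟨f, hfe⟩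
      have : kmDist x (R.erase r) ≤ dist x f := by
        simp only [kmDist, dif_pos hne']
        exact Finset.inf'_le _ hfe
      linarith
    by_cases hfQ : f ∈ R \ Q
    · rw [← Finset.add_sum_erase _ _ hfQ]
      have hfnQ : f ∉ Q := (Finset.mem_sdiff.mp hfQ).2
      have hQsub : Q ⊆ R.erase f := fun q hq =>
        Finset.mem_erase.mpr ⟨fun h => hfnQ (h ▸ hq), hQR.subset hq⟩
      have h1 : kmDist x (R.erase f) ≤ kmDist x Q := kmDist_mono hQ hQsub
      have h2 : ∑ r ∈ (R \ Q).erase f, (kmDist x (R.erase r) - kmDist x R) ≤ 0 :=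
        Finset.sum_nonpos fun r hr =>
          hzero r (Finset.mem_of_mem_erase hr) (Finset.ne_of_mem_erase hr)
      linarith
    · have h2 : ∑ r ∈ R \ Q, (kmDist x (R.erase r) - kmDist x R) ≤ 0 :=
        Finset.sum_nonpos fun r hr => hzero r hr (fun h => hfQ (h ▸ hr))
      linarith
  have hkey : ∑ r ∈ R \ Q, (kmCost (R.erase r) - kmCost R) ≤ kmCost Q - kmCost R := by
    calc ∑ r ∈ R \ Q, (kmCost (R.erase r) - kmCost R)
        = ∑ x : X, ∑ r ∈ R \ Q, (kmDist x (R.erase r) - kmDist x R) := by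
          rw [Finset.sum_comm]
          simp [kmCost, Finset.sum_sub_distrib]
      _ ≤ ∑ x : X, (kmDist x Q - kmDist x R) := Finset.sum_le_sum fun x _ => hx x
      _ = kmCost Q - kmCost R := by simp [kmCost, Finset.sum_sub_distrib]
  have hconst : ∑ _r ∈ R \ Q, (kmCost Q - kmCost R) / ((R \ Q).card : ℝ)
      = kmCost Q - kmCost R := by
    rw [Finset.sum_const, nsmul_eq_mul]
    field_simp
  have hsum : ∑ r ∈ R \ Q, (kmCost (R.erase r) - kmCost R)
      ≤ ∑ _r ∈ R \ Q, (kmCost Q - kmCost R) / ((R \ Q).card : ℝ) := by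
    rw [hconst]; exact hkey
  exact Finset.exists_le_of_sum_le hne hsum
end

section
/- Let (X, c) be a finite metric space, let M ⊆ X be nonempty with |M| = k, and let R ⊆ X with |R| = j > k. Then there exists r ∈ R such that cost(R \ {r}) − cost(R) ≤ (2/(j − k))·cost(M). -/
namespace KMaux

variable {X : Type*} [MetricSpace X]

/-- A choice of nearest point of `F` to `x`. -/
noncomputable def argmin (F : Finset X) (h : F.Nonempty) (x : X) : X :=
  (Finset.exists_mem_eq_inf' h (fun f => dist x f)).choose

lemma argmin_mem (F : Finset X) (h : F.Nonempty) (x : X) : argmin F h x ∈ F :=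
  (Finset.exists_mem_eq_inf' h (fun f => dist x f)).choose_spec.1

lemma dist_argmin (F : Finset X) (h : F.Nonempty) (x : X) :
    kmDist x F = dist x (argmin F h x) := by
  rw [kmDist, dif_pos h]
  exact (Finset.exists_mem_eq_inf' h (fun f => dist x f)).choose_spec.2

lemma kmDist_le (F : Finset X) (hF : F.Nonempty) (x f : X) (hf : f ∈ F) :
    kmDist x F ≤ dist x f := by
  rw [kmDist, dif_pos hF]
  exact Finset.inf'_le _ hf

lemma kmDist_nonneg (x : X) (F : Finset X) : 0 ≤ kmDist x F := by
  rw [kmDist]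
  split
  · exact Finset.le_inf' _ _ (fun f _ => dist_nonneg)
  · exact le_refl 0

end KMaux

/-- For any `k`-element nonempty `M` and any `j`-element `R` with `j > k`, some facility
`r ∈ R` can be removed at incremental cost at most `(2/(j−k))·cost(M)`. -/
theorem rgreedy_step_bound {X : Type*} [MetricSpace X] [Fintype X] [DecidableEq X]
    (M R : Finset X) (k j : ℕ) (hM : M.Nonempty) (hMk : M.card = k)
    (hRj : R.card = j) (hjk : k < j) :
    ∃ r ∈ R, kmCost (R.erase r) - kmCost R ≤ (2 / ((j : ℝ) - (k : ℝ))) * kmCost M := by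
  classical
  have hk1 : 1 ≤ k := by
    have := Finset.card_pos.mpr hM
    omega
  have hR : R.Nonempty := Finset.card_pos.mp (by omega)
  set μ : X → X := KMaux.argmin M hM with hμ
  set φ : X → X := KMaux.argmin R hR with hφ
  set B : Finset X := M.image φ with hB
  set S : Finset X := R \ B with hS
  have hBcard : B.card ≤ k := hMk ▸ Finset.card_image_le
  have hScard : j - k ≤ S.card := by
    have := Finset.card_le_card_sdiff_add_card (s := R) (t := B)
    rw [hS]
    omega
  have hSne : S.Nonempty := Finset.card_pos.mp (by omega)
  have hcMnn : 0 ≤ kmCost M := Finset.sum_nonneg (fun x _ => KMaux.kmDist_nonneg x M)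
  have key : ∀ r ∈ S, kmCost (R.erase r) - kmCost R ≤
      ∑ x ∈ Finset.univ.filter (fun x => φ x = r), 2 * kmDist x M := by
    intro r hrS
    have hrR : r ∈ R := (Finset.mem_sdiff.mp hrS).1
    have hrB : r ∉ B := (Finset.mem_sdiff.mp hrS).2
    have hEne : (R.erase r).Nonempty := by
      rw [← Finset.card_pos, Finset.card_erase_of_mem hrR, hRj]; omega
    rw [kmCost, kmCost, ← Finset.sum_sub_distrib,
      ← Finset.sum_filter_add_sum_filter_not Finset.univ (fun x => φ x = r)]
    have h2 : ∑ x ∈ Finset.univ.filter (fun x => ¬ φ x = r),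
        (kmDist x (R.erase r) - kmDist x R) ≤ 0 := by
      apply Finset.sum_nonpos
      intro x hx
      simp only [Finset.mem_filter] at hx
      have hmem : φ x ∈ R.erase r :=
        Finset.mem_erase.mpr ⟨hx.2, KMaux.argmin_mem R hR x⟩
      have : kmDist x (R.erase r) ≤ kmDist x R := by
        rw [KMaux.dist_argmin R hR x]
        exact KMaux.kmDist_le _ hEne x _ hmem
      linarith
    have h1 : ∑ x ∈ Finset.univ.filter (fun x => φ x = r),
        (kmDist x (R.erase r) - kmDist x R) ≤
        ∑ x ∈ Finset.univ.filter (fun x => φ x = r), 2 * kmDist x M := by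
      apply Finset.sum_le_sum
      intro x hx
      have hφμ : φ (μ x) ≠ r := by
        intro h
        exact hrB (h ▸ Finset.mem_image_of_mem φ (KMaux.argmin_mem M hM x))
      have hmem : φ (μ x) ∈ R.erase r :=
        Finset.mem_erase.mpr ⟨hφμ, KMaux.argmin_mem R hR _⟩
      have b1 : kmDist x (R.erase r) ≤ dist x (φ (μ x)) :=
        KMaux.kmDist_le _ hEne x _ hmem
      have b2 : dist x (φ (μ x)) ≤ dist x (μ x) + dist (μ x) (φ (μ x)) :=
        dist_triangle _ _ _
      have b3 : dist (μ x) (φ (μ x)) ≤ dist (μ x) (φ x) := by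
        rw [hφ, ← KMaux.dist_argmin R hR (μ x)]
        exact KMaux.kmDist_le R hR (μ x) (φ x) (KMaux.argmin_mem R hR x)
      have b4 : dist (μ x) (φ x) ≤ dist (μ x) x + dist x (φ x) := dist_triangle _ _ _
      have e1 : dist x (μ x) = kmDist x M := (KMaux.dist_argmin M hM x).symm
      have e2 : dist x (φ x) = kmDist x R := (KMaux.dist_argmin R hR x).symm
      rw [dist_comm (μ x) x] at b4
      linarith
    linarith
  have hsum : ∑ r ∈ S, (kmCost (R.erase r) - kmCost R) ≤ 2 * kmCost M := by
    calc ∑ r ∈ S, (kmCost (R.erase r) - kmCost R)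
        ≤ ∑ r ∈ S, ∑ x ∈ Finset.univ.filter (fun x => φ x = r), 2 * kmDist x M :=
          Finset.sum_le_sum key
      _ = ∑ x ∈ Finset.univ.filter (fun x => φ x ∈ S), 2 * kmDist x M := by
          rw [Finset.sum_fiberwise_eq_sum_filter]
      _ ≤ ∑ x : X, 2 * kmDist x M :=
          Finset.sum_le_sum_of_subset_of_nonneg (Finset.filter_subset _ _)
            (fun x _ _ => by
              have := KMaux.kmDist_nonneg x M; linarith)
      _ = 2 * kmCost M := by rw [kmCost, Finset.mul_sum]
  have hsum' : ∑ r ∈ S, (kmCost (R.erase r) - kmCost R) ≤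
      ∑ _r ∈ S, (2 * kmCost M / S.card) := by
    have hS0 : (0:ℝ) < S.card := by
      exact_mod_cast Finset.card_pos.mpr hSne
    rw [Finset.sum_const, nsmul_eq_mul, mul_comm, div_mul_cancel₀ _ (ne_of_gt hS0)]
    exact hsum
  obtain ⟨r, hrS, hr⟩ := Finset.exists_le_of_sum_le hSne hsum'
  refine ⟨r, (Finset.mem_sdiff.mp hrS).1, ?_⟩
  have hjk' : (0:ℝ) < (j:ℝ) - (k:ℝ) := by
    have : (k:ℝ) < j := by exact_mod_cast hjk
    linarith
  have hcard : (j:ℝ) - (k:ℝ) ≤ S.card := by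
    have : ((j - k : ℕ) : ℝ) ≤ S.card := by exact_mod_cast hScard
    push_cast at this
    rw [Nat.cast_sub (le_of_lt hjk)] at *
    · linarith
  calc kmCost (R.erase r) - kmCost R ≤ 2 * kmCost M / S.card := hr
    _ ≤ 2 * kmCost M / ((j:ℝ) - (k:ℝ)) := by
        apply div_le_div_of_nonneg_left (by linarith) hjk' hcard
    _ = (2 / ((j : ℝ) - (k : ℝ))) * kmCost M := by ring
end

section
/- For every integer j ≥ 2 there exist a finite metric space (X, c), a point μ ∈ X, and a subset R ⊆ X with |R| = j, such that cost({μ}) = min_{x ∈ X} cost({x}) (μ is an optimal 1-median) and for every r ∈ R, cost(R \ {r}) − cost(R) ≥ cost({μ})/(2j). In other words, the single-step bound min_{r ∈ R} cost(R \ {r}) − cost(R) ≤ 2·cost(M)/(|R| − 1) for 1-element M is tight up to a constant factor. -/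
/-! The discrete metric is already tight: every singleton is an optimal 1-median of cost
`j - 1`, while removing any point of `R = X` raises the cost from `0` to `1 ≥ (j - 1)/(2j)`. -/

open Finset

noncomputable abbrev discreteMetric (X : Type*) [DecidableEq X] : MetricSpace X where
  dist x y := if x = y then 0 else 1
  dist_self _ := if_pos rfl
  dist_comm x y := by simp only [eq_comm]
  dist_triangle x y z := by split_ifs <;> simp_all
  eq_of_dist_eq_zero {x y} h := by
    by_contra hne
    simp [hne] at h

section DiscreteMetric

variable {X : Type*} [DecidableEq X]

theorem kmDist_discreteMetric {F : Finset X} (hF : F.Nonempty) (x : X) :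
    @kmDist X (discreteMetric X) x F = if x ∈ F then 0 else 1 := by
  let _ := discreteMetric X
  rw [kmDist, dif_pos hF]
  split_ifs with hx
  · exact le_antisymm ((inf'_le _ hx).trans_eq (dist_self x)) (le_inf' _ _ fun _ _ => dist_nonneg)
  · have hdist : ∀ f ∈ F, dist x f = 1 := fun f hf => if_neg fun h : x = f => hx (h ▸ hf)
    rw [inf'_congr hF rfl hdist, inf'_const]

variable [Fintype X]

theorem kmCost_discreteMetric {F : Finset X} (hF : F.Nonempty) :
    @kmCost X (discreteMetric X) _ F = #Fᶜ := by
  have hdist (x : X) : (if x ∈ F then (0 : ℝ) else 1) = if x ∈ Fᶜ then 1 else 0 := by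
    by_cases hx : x ∈ F <;> simp [hx]
  simp only [kmCost, kmDist_discreteMetric hF, hdist, sum_boole, filter_mem_eq_inter, univ_inter]

end DiscreteMetric

/-- Tightness of the single-step bound: for every `j ≥ 2` there is a finite metric space,
an optimal 1-median `μ`, and a `j`-element set `R` such that removing *any* `r ∈ R`
increases the cost by at least `cost({μ})/(2j)`. -/
theorem rgreedy_single_step_tight (j : ℕ) (hj : 2 ≤ j) :
    ∃ (n : ℕ) (mX : MetricSpace (Fin n)) (μ : Fin n) (R : Finset (Fin n)),
      R.card = j ∧
      (∀ x : Fin n, @kmCost _ mX _ ({μ} : Finset (Fin n)) ≤ @kmCost _ mX _ ({x} : Finset (Fin n))) ∧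
      (∀ r ∈ R,
        @kmCost _ mX _ ({μ} : Finset (Fin n)) / (2 * (j : ℝ))
          ≤ @kmCost _ mX _ (R.erase r) - @kmCost _ mX _ R) := by
  have hj0 : 0 < j := by omega
  have hsingleton (y : Fin j) : @kmCost _ (discreteMetric _) _ {y} = ((j - 1 : ℕ) : ℝ) := by
    rw [kmCost_discreteMetric (singleton_nonempty y), card_compl, Fintype.card_fin, card_singleton]
  refine ⟨j, discreteMetric _, ⟨0, hj0⟩, univ, card_fin j,
    fun x => (hsingleton _).trans_le (hsingleton x).ge, fun r _ => ?_⟩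
  have herase_nonempty : (univ.erase r).Nonempty := by
    rw [← card_pos, card_erase_of_mem (mem_univ r), card_fin]
    omega
  rw [hsingleton, kmCost_discreteMetric herase_nonempty, kmCost_discreteMetric ⟨r, mem_univ r⟩,
    compl_erase, compl_univ, insert_empty, card_singleton, card_empty, div_le_iff₀ (by positivity)]
  have : ((j - 1 : ℕ) : ℝ) ≤ j := Nat.cast_le.mpr (Nat.sub_le j 1)
  push_cast
  linarith
end

section
/- Let A ≥ 1 be a real number. There exists a constant C > 0, depending only on A, such that the following holds: for every integer n ≥ 3, every integer G ≥ 2, and all positive reals y_1, …, y_G satisfying ∑_{i=1}^{G−1} y_{i+1}/(y_i + y_{i+1}) ≤ A and (max_i y_i)/(min_i y_i) ≤ n, one has G ≤ C · (1 + (log n)/(log log n)). -/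
open Finset

private lemma telescope_bound_aux (f b : ℕ → ℝ) (m : ℕ)
    (hb0 : ∀ i ∈ Icc 1 m, 0 ≤ b i)
    (h : ∀ i ∈ Icc 1 m, f (i + 1) ≤ b i * f i) :
    f (m + 1) ≤ f 1 * ∏ i ∈ Icc 1 m, b i := by
  induction m with
  | zero => simp
  | succ k ih =>
    have hk : f (k + 1) ≤ f 1 * ∏ i ∈ Icc 1 k, b i := by
      apply ih
      · intro i hi
        exact hb0 i (Icc_subset_Icc_right (Nat.le_succ k) hi)
      · intro i hi
        exact h i (Icc_subset_Icc_right (Nat.le_succ k) hi)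
    have hmem : k + 1 ∈ Icc 1 (k + 1) := by simp
    calc f (k + 1 + 1) ≤ b (k + 1) * f (k + 1) := h (k + 1) hmem
      _ ≤ b (k + 1) * (f 1 * ∏ i ∈ Icc 1 k, b i) :=
          mul_le_mul_of_nonneg_left hk (hb0 (k + 1) hmem)
      _ = f 1 * ∏ i ∈ Icc 1 (k + 1), b i := by
          rw [Finset.prod_Icc_succ_top (Nat.le_add_left 1 k)]
          ring

private lemma count_bound_aux {s u : Finset ℕ} (f : ℕ → ℝ) (A c : ℝ)
    (hus : u ⊆ s) (hf0 : ∀ i ∈ s, 0 ≤ f i) (hfc : ∀ i ∈ u, c ≤ f i)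
    (hsum : ∑ i ∈ s, f i ≤ A) : (u.card : ℝ) * c ≤ A := by
  have h1 : (u.card : ℝ) * c ≤ ∑ i ∈ u, f i := by
    have := Finset.card_nsmul_le_sum u f c hfc
    simpa [nsmul_eq_mul] using this
  have h2 : ∑ i ∈ u, f i ≤ ∑ i ∈ s, f i :=
    Finset.sum_le_sum_of_subset_of_nonneg hus (fun i hi _ => hf0 i hi)
  linarith

set_option maxHeartbeats 1600000 in
/-- Combinatorial core of Lemma 4: if positive reals `y_1, …, y_G` satisfy
`∑_{i=1}^{G−1} y_{i+1}/(y_i + y_{i+1}) ≤ A` and `(max_i y_i)/(min_i y_i) ≤ n`,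
then `G ≤ C (1 + log n / log log n)` for a constant `C` depending only on `A`. -/
theorem rgreedy_block_length_bound (A : ℝ) (hA : 1 ≤ A) :
    ∃ C : ℝ, 0 < C ∧
      ∀ (n : ℕ), 3 ≤ n → ∀ (G : ℕ), 2 ≤ G → ∀ y : ℕ → ℝ,
        (∀ i ∈ Finset.Icc 1 G, 0 < y i) →
        (∑ i ∈ Finset.Icc 1 (G - 1), y (i + 1) / (y i + y (i + 1))) ≤ A →
        (∀ i ∈ Finset.Icc 1 G, ∀ j ∈ Finset.Icc 1 G, y i ≤ (n : ℝ) * y j) →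
        (G : ℝ) ≤ C * (1 + Real.log n / Real.log (Real.log n)) := by
  classical
  refine ⟨10 * A + 3, by linarith, ?_⟩
  intro n hn G hG y hy hsum hratio
  set L := Real.log n with hLdef
  have hn3 : (3 : ℝ) ≤ (n : ℝ) := by exact_mod_cast hn
  have hL1 : 1 < L := by
    have he : Real.exp 1 < 3 := by
      have := Real.exp_one_lt_d9
      norm_num at this ⊢
      linarith
    calc (1 : ℝ) = Real.log (Real.exp 1) := (Real.log_exp 1).symm
      _ < Real.log n := Real.log_lt_log (Real.exp_pos 1) (lt_of_lt_of_le he hn3)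
  have hL0 : 0 < L := by linarith
  set LL := Real.log L with hLLdef
  have hLL0 : 0 < LL := Real.log_pos hL1
  have hsq0 : 0 < Real.sqrt L := Real.sqrt_pos.mpr hL0
  have hsq1 : 1 < Real.sqrt L := by
    have : Real.sqrt 1 < Real.sqrt L := Real.sqrt_lt_sqrt (by norm_num) hL1
    simpa using this
  set δ : ℝ := 1 / (2 * Real.sqrt L) with hδdef
  have hδ0 : 0 < δ := by positivity
  have h2δ : 2 * δ = (Real.sqrt L)⁻¹ := by
    rw [hδdef]; field_simp
  set t : ℕ → ℝ := fun i => y (i + 1) / (y i + y (i + 1)) with ht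
  set s := Icc 1 (G - 1) with hsdef
  set b : ℕ → ℝ := fun i => if 1 / 2 ≤ t i then (n : ℝ) else if t i ≤ δ then 2 * δ else 1
    with hb
  -- basic positivity on the relevant range
  have hmem2 : ∀ i ∈ s, 0 < y i ∧ 0 < y (i + 1) := by
    intro i hi
    rw [hsdef, Finset.mem_Icc] at hi
    constructor
    · exact hy i (by rw [Finset.mem_Icc]; omega)
    · exact hy (i + 1) (by rw [Finset.mem_Icc]; omega)
  have ht0 : ∀ i ∈ s, 0 ≤ t i := by
    intro i hi
    obtain ⟨h1, h2⟩ := hmem2 i hi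
    rw [ht]
    positivity
  -- per-index bound
  have hb0 : ∀ i ∈ Icc 1 (G - 1), 0 ≤ b i := by
    intro i _
    simp only [hb]
    split_ifs
    · positivity
    · positivity
    · norm_num
  have key : ∀ i ∈ Icc 1 (G - 1), y (i + 1) ≤ b i * y i := by
    intro i hi
    have hi' : i ∈ s := by rwa [hsdef]
    obtain ⟨hyi, hyi1⟩ := hmem2 i hi'
    rw [Finset.mem_Icc] at hi
    have hys : 0 < y i + y (i + 1) := by linarith
    have htval : t i = y (i + 1) / (y i + y (i + 1)) := by rw [ht]
    simp only [hb]
    split_ifs with h1 h2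
    · exact hratio (i + 1) (by rw [Finset.mem_Icc]; omega) i (by rw [Finset.mem_Icc]; omega)
    · -- t i ≤ δ < 1/2
      push_neg at h1
      rw [htval] at h1 h2
      have hlt : y (i + 1) < y i := by
        have := (div_lt_iff₀ hys).mp h1
        linarith
      have h2' : y (i + 1) ≤ δ * (y i + y (i + 1)) := (div_le_iff₀ hys).mp h2
      nlinarith
    · push_neg at h1
      rw [htval] at h1
      have hlt : y (i + 1) < y i := by
        have := (div_lt_iff₀ hys).mp h1
        linarith
      linarith
  -- telescoping
  have hG1 : G - 1 + 1 = G := by omega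
  have htel : y G ≤ y 1 * ∏ i ∈ Icc 1 (G - 1), b i := by
    have := telescope_bound_aux y b (G - 1) hb0 key
    rwa [hG1] at this
  -- split the product
  set sP := s.filter (fun i => 1 / 2 ≤ t i) with hsP
  set sN := s.filter (fun i => ¬(1 / 2 ≤ t i)) with hsN
  set sQ := sN.filter (fun i => t i ≤ δ) with hsQ
  set sR := sN.filter (fun i => ¬(t i ≤ δ)) with hsR
  set K := sP.card with hK
  set m0 := sQ.card with hm0
  set mR := sR.card with hmR
  have hprodP : ∏ i ∈ sP, b i = (n : ℝ) ^ K := by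
    rw [hK]
    apply Finset.prod_eq_pow_card
    intro i hi
    rw [hsP, Finset.mem_filter] at hi
    simp only [hb]
    rw [if_pos hi.2]
  have hprodQ : ∏ i ∈ sQ, b i = (2 * δ) ^ m0 := by
    rw [hm0]
    apply Finset.prod_eq_pow_card
    intro i hi
    rw [hsQ, Finset.mem_filter] at hi
    have hi2 := hi.2
    have hi1 : ¬(1 / 2 ≤ t i) := by
      have := hi.1
      rw [hsN, Finset.mem_filter] at this
      exact this.2
    simp only [hb]
    rw [if_neg hi1, if_pos hi2]
  have hprodR : ∏ i ∈ sR, b i = 1 := by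
    apply Finset.prod_eq_one
    intro i hi
    rw [hsR, Finset.mem_filter] at hi
    have hi2 := hi.2
    have hi1 : ¬(1 / 2 ≤ t i) := by
      have := hi.1
      rw [hsN, Finset.mem_filter] at this
      exact this.2
    simp only [hb]
    rw [if_neg hi1, if_neg hi2]
  have hprodN : ∏ i ∈ sN, b i = (2 * δ) ^ m0 := by
    have := Finset.prod_filter_mul_prod_filter_not sN (fun i => t i ≤ δ) b
    rw [← hsQ, ← hsR] at this
    rw [← this, hprodQ, hprodR, mul_one]
  have hprodall : ∏ i ∈ Icc 1 (G - 1), b i = (n : ℝ) ^ K * (2 * δ) ^ m0 := by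
    have := Finset.prod_filter_mul_prod_filter_not s (fun i => 1 / 2 ≤ t i) b
    rw [← hsP, ← hsN] at this
    rw [← hsdef, ← this, hprodP, hprodN]
  -- get 1 ≤ n^(K+1) * (2δ)^m0
  have hyG : 0 < y G := hy G (by rw [Finset.mem_Icc]; omega)
  have hy1G : y 1 ≤ (n : ℝ) * y G :=
    hratio 1 (by rw [Finset.mem_Icc]; omega) G (by rw [Finset.mem_Icc]; omega)
  have hn0 : (0 : ℝ) < n := by linarith
  have hone : 1 ≤ (n : ℝ) ^ (K + 1) * (2 * δ) ^ m0 := by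
    have hc0 : (0 : ℝ) ≤ (n : ℝ) ^ K * (2 * δ) ^ m0 := by positivity
    have step : y G ≤ y G * ((n : ℝ) ^ (K + 1) * (2 * δ) ^ m0) := by
      calc y G ≤ y 1 * ((n : ℝ) ^ K * (2 * δ) ^ m0) := by rwa [hprodall] at htel
        _ ≤ ((n : ℝ) * y G) * ((n : ℝ) ^ K * (2 * δ) ^ m0) :=
            mul_le_mul_of_nonneg_right hy1G hc0
        _ = y G * ((n : ℝ) ^ (K + 1) * (2 * δ) ^ m0) := by ring
    have := le_of_mul_le_mul_left (by linarith : y G * 1 ≤ y G * ((n : ℝ) ^ (K + 1) * (2 * δ) ^ m0)) hyG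
    linarith
  have hpow : Real.sqrt L ^ m0 ≤ (n : ℝ) ^ (K + 1) := by
    rw [h2δ, inv_pow] at hone
    have hp0 : 0 < Real.sqrt L ^ m0 := pow_pos hsq0 m0
    have := (one_le_div hp0).mp (by rwa [div_eq_mul_inv])
    exact this
  -- take logs
  have hlog : (m0 : ℝ) * (LL / 2) ≤ ((K : ℝ) + 1) * L := by
    have h1 : Real.log (Real.sqrt L ^ m0) ≤ Real.log ((n : ℝ) ^ (K + 1)) :=
      Real.log_le_log (pow_pos hsq0 m0) hpow
    rw [Real.log_pow, Real.log_pow, Real.log_sqrt hL0.le] at h1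
    push_cast at h1
    rw [hLLdef]
    convert h1 using 2 <;> ring_nf
  -- count bounds
  have hKbound : (K : ℝ) * (1 / 2) ≤ A := by
    apply count_bound_aux t A (1 / 2) (Finset.filter_subset _ _) ht0 _ hsum
    intro i hi
    rw [Finset.mem_filter] at hi
    exact hi.2
  have hmRbound : (mR : ℝ) * δ ≤ A := by
    apply count_bound_aux t A δ _ ht0 _ hsum
    · rw [hsR, hsN]
      exact (Finset.filter_subset _ _).trans (Finset.filter_subset _ _)
    · intro i hi
      rw [hsR, Finset.mem_filter] at hi
      push_neg at hi
      exact (hi.2).le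
  -- cardinalities
  have hcards : K + m0 + mR = G - 1 := by
    have h1 : sP.card + sN.card = s.card := by
      rw [hsP, hsN]
      exact Finset.card_filter_add_card_filter_not _
    have h2 : sQ.card + sR.card = sN.card := by
      rw [hsQ, hsR]
      exact Finset.card_filter_add_card_filter_not _
    have h3 : s.card = G - 1 := by
      rw [hsdef, Nat.card_Icc]
      omega
    omega
  -- final arithmetic
  have hKr : (K : ℝ) ≤ 2 * A := by linarith
  have hLL2sq : LL ≤ 2 * Real.sqrt L := by
    have h1 : Real.log (Real.sqrt L) ≤ Real.sqrt L - 1 :=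
      Real.log_le_sub_one_of_pos hsq0
    rw [Real.log_sqrt hL0.le] at h1
    rw [hLLdef]
    linarith
  have hsqR : Real.sqrt L ≤ 2 * (L / LL) := by
    rw [mul_div_assoc' 2 L LL, le_div_iff₀ hLL0]
    have : Real.sqrt L * LL ≤ Real.sqrt L * (2 * Real.sqrt L) :=
      mul_le_mul_of_nonneg_left hLL2sq hsq0.le
    calc Real.sqrt L * LL ≤ Real.sqrt L * (2 * Real.sqrt L) := this
      _ = 2 * (Real.sqrt L * Real.sqrt L) := by ring
      _ = 2 * L := by rw [Real.mul_self_sqrt hL0.le]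
  have hmR1 : (mR : ℝ) ≤ 2 * A * Real.sqrt L := by
    have h1 : (mR : ℝ) * δ * (2 * Real.sqrt L) ≤ A * (2 * Real.sqrt L) :=
      mul_le_mul_of_nonneg_right hmRbound (by positivity)
    have h2 : (mR : ℝ) * δ * (2 * Real.sqrt L) = mR := by
      rw [hδdef]
      field_simp
    linarith [h1, h2.symm.le, h2.le]
  have hmR2 : (mR : ℝ) ≤ 4 * A * (L / LL) := by
    have hA0 : (0 : ℝ) ≤ 2 * A := by linarith
    have := mul_le_mul_of_nonneg_left hsqR hA0
    calc (mR : ℝ) ≤ 2 * A * Real.sqrt L := hmR1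
      _ ≤ 2 * A * (2 * (L / LL)) := this
      _ = 4 * A * (L / LL) := by ring
  have hm0r : (m0 : ℝ) ≤ (4 * A + 2) * (L / LL) := by
    have h1 : ((K : ℝ) + 1) * L ≤ (2 * A + 1) * L :=
      mul_le_mul_of_nonneg_right (by linarith) hL0.le
    have h2 : (m0 : ℝ) * LL ≤ (4 * A + 2) * L := by linarith
    rw [mul_div_assoc' _ L LL, le_div_iff₀ hLL0]
    linarith
  have hGeq : (G : ℝ) = (K : ℝ) + m0 + mR + 1 := by
    have : G = K + m0 + mR + 1 := by omega
    rw [this]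
    push_cast
    ring
  have hR0 : 0 ≤ L / LL := by positivity
  nlinarith [mul_nonneg (by linarith : (0:ℝ) ≤ A) hR0]
end
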